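/- arXiv:1610.02529 — 4 statements merged into one kernel-verified Lean document; each statement's English description precedes it below -/
import Mathlib

section
/- Let u : ℝⁿ → ℝⁿ be measurable and bounded with |u(x)| ≥ c₀ > 0 for a.e. x ∈ supp(u). Let 1 < p₁ ≤ r ≤ p₂ < ∞ with 1/r = σ/p₁ + (1-σ)/p₂ for some σ ∈ (0,1). Then ‖u‖_{L^{p₁}}^σ · ‖u‖_{L^{p₂}}^{1-σ} ≤ (‖u‖_{L^∞}/c₀)^{1-1/r} · ‖u‖_{L^r}. -/
/-!
On the support of `u` we have `c₀ ≤ |u| ≤ ‖u‖_∞`, hence pointwise `|u|^p₁ ≤ c₀^(p₁-r) |u|^r` and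
`|u|^p₂ ≤ ‖u‖_∞^(p₂-r) |u|^r`. Integrating, `‖u‖_p₁ ≤ c₀^(1-r/p₁) ‖u‖_r^(r/p₁)` and
`‖u‖_p₂ ≤ ‖u‖_∞^(1-r/p₂) ‖u‖_r^(r/p₂)`. By the interpolation relation the powers of `‖u‖_r` in
`‖u‖_p₁^σ ‖u‖_p₂^(1-σ)` add up to `1`, and the constants combine to `(‖u‖_∞/c₀)^a` with
`a = σ(r/p₁ - 1) ≤ 1 - 1/r`.
-/

open MeasureTheory ENNReal

namespace ENNReal

theorem rpow_eq_rpow_sub_mul_rpow {x : ℝ≥0∞} (hx₀ : x ≠ 0) (hx : x ≠ ⊤) (p r : ℝ) :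
    x ^ p = x ^ (p - r) * x ^ r := by
  rw [← rpow_add _ _ hx₀ hx, sub_add_cancel]

theorem rpow_le_rpow_sub_mul_rpow_of_le {x M : ℝ≥0∞} {p r : ℝ} (hx : x ≠ ⊤) (hxM : x ≤ M)
    (hp : 0 < p) (hrp : r ≤ p) : x ^ p ≤ M ^ (p - r) * x ^ r := by
  rcases eq_or_ne x 0 with rfl | hx₀
  · simp [zero_rpow_of_pos hp]
  rw [rpow_eq_rpow_sub_mul_rpow hx₀ hx p r]
  gcongr

theorem rpow_le_rpow_sub_mul_rpow_of_ge {x c : ℝ≥0∞} {p r : ℝ} (hx : x ≠ ⊤)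
    (hcx : x ≠ 0 → c ≤ x) (hp : 0 < p) (hpr : p ≤ r) : x ^ p ≤ c ^ (p - r) * x ^ r := by
  rcases eq_or_ne x 0 with rfl | hx₀
  · simp [zero_rpow_of_pos hp]
  rw [rpow_eq_rpow_sub_mul_rpow hx₀ hx p r, ← neg_sub r p, rpow_neg, rpow_neg]
  gcongr
  exact hcx hx₀

theorem rpow_mul_rpow_le_div_rpow_mul {A B N c M : ℝ≥0∞} {p₁ p₂ r σ : ℝ}
    (hc₀ : c ≠ 0) (hc : c ≠ ⊤) (hcM : c ≤ M) (hp₁ : 1 ≤ p₁) (hp₁r : p₁ ≤ r) (hrp₂ : r ≤ p₂)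
    (hσ₀ : 0 ≤ σ) (hσ₁ : σ ≤ 1) (hrel : 1 / r = σ / p₁ + (1 - σ) / p₂)
    (hA : A ≤ c ^ (1 - r / p₁) * N ^ (r / p₁)) (hB : B ≤ M ^ (1 - r / p₂) * N ^ (r / p₂)) :
    A ^ σ * B ^ (1 - σ) ≤ (M / c) ^ (1 - 1 / r) * N := by
  have hr : 0 < r := by linarith
  have hp₂ : 0 < p₂ := by linarith
  have hsum : r / p₁ * σ + r / p₂ * (1 - σ) = 1 := by
    field_simp at hrel ⊢
    linarith
  set a := σ * (r / p₁ - 1) with ha_def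
  have ha₀ : 0 ≤ a := mul_nonneg hσ₀ (by rw [sub_nonneg, one_le_div (by linarith)]; exact hp₁r)
  have ha₁ : a ≤ 1 - 1 / r := by
    have h₁ : σ / p₁ ≤ σ := div_le_self hσ₀ hp₁
    have h₂ : (1 - σ) / p₂ ≤ (1 - σ) * r / p₂ := by
      gcongr
      exact le_mul_of_one_le_right (by linarith) (by linarith)
    have : 1 - 1 / r - a = ((1 - σ) * r / p₂ - (1 - σ) / p₂) + (σ - σ / p₁) := by
      linear_combination -hsum - hrel - ha_def
    linarith
  calc A ^ σ * B ^ (1 - σ)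
      ≤ (c ^ (1 - r / p₁) * N ^ (r / p₁)) ^ σ * (M ^ (1 - r / p₂) * N ^ (r / p₂)) ^ (1 - σ) := by
        gcongr
    _ = c ^ (-a) * M ^ a * N := by
        rw [mul_rpow_of_nonneg _ _ hσ₀, mul_rpow_of_nonneg _ _ (sub_nonneg.2 hσ₁), ← rpow_mul,
          ← rpow_mul, ← rpow_mul, ← rpow_mul]
        have e₁ : (1 - r / p₁) * σ = -a := by rw [ha_def]; ring
        have e₂ : (1 - r / p₂) * (1 - σ) = a := by linear_combination -hsum - ha_def
        rw [e₁, e₂, mul_mul_mul_comm, ← rpow_add_of_nonneg _ _ (by positivity)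
          (mul_nonneg (by positivity) (sub_nonneg.2 hσ₁)), hsum, rpow_one]
    _ = (M / c) ^ a * N := by rw [div_rpow_of_nonneg _ _ ha₀, rpow_neg, div_eq_mul_inv]; ring
    _ ≤ (M / c) ^ (1 - 1 / r) * N := by
        gcongr
        rwa [ENNReal.le_div_iff_mul_le (.inl hc₀) (.inl hc), one_mul]

end ENNReal

section

variable {α E : Type*} [MeasurableSpace α] {μ : Measure α} [NormedAddCommGroup E] {f : α → E}

theorem lintegral_enorm_rpow_le_eLpNormEssSup_rpow_mul {q r : ℝ} (hf : eLpNormEssSup f μ ≠ ⊤)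
    (hq : 0 < q) (hrq : r ≤ q) :
    ∫⁻ x, ‖f x‖ₑ ^ q ∂μ ≤ eLpNormEssSup f μ ^ (q - r) * ∫⁻ x, ‖f x‖ₑ ^ r ∂μ := by
  rw [← lintegral_const_mul' _ _ (rpow_ne_top_of_nonneg (by linarith) hf)]
  refine lintegral_mono_ae ?_
  filter_upwards [enorm_ae_le_eLpNormEssSup f μ] with x hx
  exact rpow_le_rpow_sub_mul_rpow_of_le enorm_ne_top hx hq hrq

theorem lintegral_enorm_rpow_le_rpow_mul_of_le_enorm {c : ℝ≥0∞} {p r : ℝ} (hc : c ≠ 0)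
    (hcf : ∀ᵐ x ∂μ, f x ≠ 0 → c ≤ ‖f x‖ₑ) (hp : 0 < p) (hpr : p ≤ r) :
    ∫⁻ x, ‖f x‖ₑ ^ p ∂μ ≤ c ^ (p - r) * ∫⁻ x, ‖f x‖ₑ ^ r ∂μ := by
  have hc' : c ^ (p - r) ≠ ⊤ := by
    rw [Ne, rpow_eq_top_iff]
    rintro (⟨h, -⟩ | ⟨-, h⟩)
    exacts [hc h, by linarith]
  rw [← lintegral_const_mul' _ _ hc']
  refine lintegral_mono_ae ?_
  filter_upwards [hcf] with x hx
  exact rpow_le_rpow_sub_mul_rpow_of_ge enorm_ne_top (fun h => hx (enorm_ne_zero.1 h)) hp hpr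

theorem eLpNorm_ofReal_le_of_lintegral_rpow_le {K : ℝ≥0∞} {q r : ℝ} (hq : 0 < q) (hr : 0 < r)
    (h : ∫⁻ x, ‖f x‖ₑ ^ q ∂μ ≤ K ^ (q - r) * ∫⁻ x, ‖f x‖ₑ ^ r ∂μ) :
    eLpNorm f (.ofReal q) μ ≤ K ^ (1 - r / q) * eLpNorm f (.ofReal r) μ ^ (r / q) := by
  simp only [eLpNorm_eq_lintegral_rpow_enorm_toReal (ofReal_pos.2 hq).ne' ofReal_ne_top,
    eLpNorm_eq_lintegral_rpow_enorm_toReal (ofReal_pos.2 hr).ne' ofReal_ne_top,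
    toReal_ofReal hq.le, toReal_ofReal hr.le]
  calc (∫⁻ x, ‖f x‖ₑ ^ q ∂μ) ^ (1 / q)
      ≤ (K ^ (q - r) * ∫⁻ x, ‖f x‖ₑ ^ r ∂μ) ^ (1 / q) := by gcongr
    _ = K ^ (1 - r / q) * ((∫⁻ x, ‖f x‖ₑ ^ r ∂μ) ^ (1 / r)) ^ (r / q) := by
      rw [mul_rpow_of_nonneg _ _ (by positivity), ← rpow_mul, ← rpow_mul]
      congr 2 <;> field_simp

end

theorem stmt1_general {n : ℕ} (u : (Fin n → ℝ) → (Fin n → ℝ))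
    (hbd : eLpNorm u ⊤ volume < ⊤)
    (c₀ : ℝ) (hc₀ : 0 < c₀)
    (hlow : ∀ᵐ x ∂(volume : Measure (Fin n → ℝ)), x ∈ Function.support u → c₀ ≤ ‖u x‖)
    (p₁ p₂ r σ : ℝ) (hp₁ : 1 < p₁) (hp₁r : p₁ ≤ r) (hrp₂ : r ≤ p₂)
    (hσ : σ ∈ Set.Ioo (0 : ℝ) 1)
    (hrel : 1 / r = σ / p₁ + (1 - σ) / p₂) :
    eLpNorm u (ENNReal.ofReal p₁) volume ^ σ
        * eLpNorm u (ENNReal.ofReal p₂) volume ^ (1 - σ)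
      ≤ (eLpNorm u ⊤ volume / ENNReal.ofReal c₀) ^ (1 - 1 / r)
        * eLpNorm u (ENNReal.ofReal r) volume := by
  obtain ⟨hσ₀, hσ₁⟩ := hσ
  rw [eLpNorm_exponent_top] at hbd ⊢
  have hc : ENNReal.ofReal c₀ ≠ 0 := (ofReal_pos.2 hc₀).ne'
  have hlow' : ∀ᵐ x ∂volume, u x ≠ 0 → ENNReal.ofReal c₀ ≤ ‖u x‖ₑ := by
    filter_upwards [hlow] with x hx hux
    rw [← ofReal_norm]
    exact ofReal_le_ofReal (hx hux)
  by_cases hcM : ENNReal.ofReal c₀ ≤ eLpNormEssSup u volume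
  swap
  · have hu : u =ᵐ[volume] 0 := by
      filter_upwards [hlow', enorm_ae_le_eLpNormEssSup u volume] with x hx hxM
      by_contra hux
      exact hcM ((hx hux).trans hxM)
    simp [eLpNorm_congr_ae hu, zero_rpow_of_pos hσ₀]
  have hr : 0 < r := by linarith
  exact rpow_mul_rpow_le_div_rpow_mul hc ofReal_ne_top hcM hp₁.le hp₁r hrp₂ hσ₀.le hσ₁.le hrel
    (eLpNorm_ofReal_le_of_lintegral_rpow_le (by linarith) hr
      (lintegral_enorm_rpow_le_rpow_mul_of_le_enorm hc hlow' (by linarith) hp₁r))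
    (eLpNorm_ofReal_le_of_lintegral_rpow_le (by linarith) hr
      (lintegral_enorm_rpow_le_eLpNormEssSup_rpow_mul hbd.ne (by linarith) hrp₂))

/-- For measurable bounded `u : ℝⁿ → ℝⁿ` with `|u(x)| ≥ c₀ > 0` a.e. on `supp u`, and
`1 < p₁ ≤ r ≤ p₂ < ∞` with `1/r = σ/p₁ + (1-σ)/p₂`, `σ ∈ (0,1)`, one has
`‖u‖_{p₁}^σ ‖u‖_{p₂}^{1-σ} ≤ (‖u‖_∞/c₀)^{1-1/r} ‖u‖_r`. -/
theorem stmt1 {n : ℕ} (u : (Fin n → ℝ) → (Fin n → ℝ)) (hu : Measurable u)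
    (hbd : eLpNorm u ⊤ volume < ⊤)
    (c₀ : ℝ) (hc₀ : 0 < c₀)
    (hlow : ∀ᵐ x ∂(volume : Measure (Fin n → ℝ)), x ∈ Function.support u → c₀ ≤ ‖u x‖)
    (p₁ p₂ r σ : ℝ) (hp₁ : 1 < p₁) (hp₁r : p₁ ≤ r) (hrp₂ : r ≤ p₂)
    (hσ : σ ∈ Set.Ioo (0 : ℝ) 1)
    (hrel : 1 / r = σ / p₁ + (1 - σ) / p₂) :
    eLpNorm u (ENNReal.ofReal p₁) volume ^ σ
        * eLpNorm u (ENNReal.ofReal p₂) volume ^ (1 - σ)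
      ≤ (eLpNorm u ⊤ volume / ENNReal.ofReal c₀) ^ (1 - 1 / r)
        * eLpNorm u (ENNReal.ofReal r) volume :=
  stmt1_general u hbd c₀ hc₀ hlow p₁ p₂ r σ hp₁ hp₁r hrp₂ hσ hrel
end

section
/- Let e₁, e₂ be symmetric trace-free 2×2 real matrices with e₁ ≠ e₂. Then there exist a ∈ ℝ² \ {0} and n ∈ ℝ² with |n| = 1 such that e₁ - e₂ = (1/2)(a ⊗ n + n ⊗ a), and moreover a · n = 0. -/
/-!
Write `e₁ - e₂ = !![α, β; β, -α]` and put `β - iα = r e^{iφ}` in polar form, `r > 0`.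
With `n = (cos θ, sin θ)`, `n⊥ = (-sin θ, cos θ)` and `θ = φ / 2`, the double-angle formulas give
`(1/2)(n⊥ ⊗ n + n ⊗ n⊥) = (1/2) !![-sin φ, cos φ; cos φ, sin φ]`, so `a = 2r n⊥` works.
-/

open Matrix Real

theorem Matrix.IsSymm.eq_of_trace_eq_zero {R : Type*} [AddCommGroup R]
    {E : Matrix (Fin 2) (Fin 2) R} (hs : E.IsSymm) (ht : E.trace = 0) :
    E = !![E 0 0, E 0 1; E 0 1, -E 0 0] := by
  rw [trace_fin_two] at ht
  ext i j
  fin_cases i <;> fin_cases j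
  · rfl
  · rfl
  · exact hs.apply 0 1
  · exact eq_neg_of_add_eq_zero_right ht

theorem dotProduct_cos_sin_self (θ : ℝ) : ![cos θ, sin θ] ⬝ᵥ ![cos θ, sin θ] = 1 := by
  simp only [dotProduct, Fin.sum_univ_two, cons_val_zero, cons_val_one]
  linear_combination cos_sq_add_sin_sq θ

theorem dotProduct_neg_sin_cos_cos_sin (θ : ℝ) :
    ![-sin θ, cos θ] ⬝ᵥ ![cos θ, sin θ] = 0 := by
  simp only [dotProduct, Fin.sum_univ_two, cons_val_zero, cons_val_one]
  ring

theorem half_smul_vecMulVec_add_vecMulVec_neg_sin_cos (r θ : ℝ) :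
    (1 / 2 : ℝ) • (vecMulVec ((2 * r) • ![-sin θ, cos θ]) ![cos θ, sin θ] +
        vecMulVec ![cos θ, sin θ] ((2 * r) • ![-sin θ, cos θ])) =
      !![-(r * sin (2 * θ)), r * cos (2 * θ); r * cos (2 * θ), r * sin (2 * θ)] := by
  rw [sin_two_mul, cos_two_mul']
  ext i j
  fin_cases i <;> fin_cases j <;> simp <;> ring

/-- Any two distinct symmetric trace-free 2×2 real matrices are symmetrized rank-one
connected: `e₁ - e₂ = (1/2)(a ⊗ n + n ⊗ a)` with `a ≠ 0`, `|n| = 1` and `a ⊥ n`. -/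
theorem stmt2 (e₁ e₂ : Matrix (Fin 2) (Fin 2) ℝ)
    (h₁s : e₁.IsSymm) (h₂s : e₂.IsSymm)
    (h₁t : e₁.trace = 0) (h₂t : e₂.trace = 0) (hne : e₁ ≠ e₂) :
    ∃ (a n : Fin 2 → ℝ), a ≠ 0 ∧ n ⬝ᵥ n = 1 ∧ a ⬝ᵥ n = 0 ∧
      e₁ - e₂ = (1 / 2 : ℝ) • (vecMulVec a n + vecMulVec n a) := by
  set E := e₁ - e₂
  have hE : E = !![E 0 0, E 0 1; E 0 1, -E 0 0] :=
    (h₁s.sub h₂s).eq_of_trace_eq_zero (by rw [trace_sub, h₁t, h₂t, sub_zero])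
  set z : ℂ := ⟨E 0 1, -E 0 0⟩
  have hz : z ≠ 0 := by
    intro h
    obtain ⟨h01, h00⟩ := Complex.ext_iff.mp h
    simp only [z, Complex.zero_re, Complex.zero_im, neg_eq_zero] at h01 h00
    refine sub_ne_zero.mpr hne (hE.trans ?_)
    rw [h00, h01, neg_zero]
    ext i j
    fin_cases i <;> fin_cases j <;> rfl
  set θ := Complex.arg z / 2
  refine ⟨(2 * ‖z‖) • ![-sin θ, cos θ], ![cos θ, sin θ], ?_, dotProduct_cos_sin_self θ, ?_, ?_⟩
  · have hunit : ![-sin θ, cos θ] ⬝ᵥ ![-sin θ, cos θ] = 1 := by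
      simp only [dotProduct, Fin.sum_univ_two, cons_val_zero, cons_val_one]
      linear_combination sin_sq_add_cos_sq θ
    refine smul_ne_zero (by positivity) fun h => ?_
    simp [h] at hunit
  · rw [smul_dotProduct, dotProduct_neg_sin_cos_cos_sin, smul_zero]
  · rw [half_smul_vecMulVec_add_vecMulVec_neg_sin_cos, mul_div_cancel₀ _ two_ne_zero,
      Complex.norm_mul_cos_arg, Complex.norm_mul_sin_arg, hE]
    simp [z]
end

section
/- Let e₁, e₂ be symmetric trace-free n×n real matrices. The following are equivalent: (i) there exist a ∈ ℝⁿ \ {0} and a unit vector n₀ with e₁ - e₂ = (1/2)(a ⊗ n₀ + n₀ ⊗ a); (ii) there exist matrices M₁, M₂ with symmetric parts e₁, e₂ respectively and rank(M₁ - M₂) = 1; (iii) rank(e₁ - e₂) ≤ 2 and e₁ ≠ e₂. -/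
open Matrix

/-! A rank-one difference `M₁ - M₂ = a ⊗ n₀` has symmetric part `a ⊙ n₀`, which is a sum of two
rank-one matrices and cannot vanish because a nonzero skew matrix has rank at least two. Conversely,
a nonzero symmetric trace-free matrix of rank at most two has exactly two nonzero eigenvalues `μ`
and `-μ`, so it equals `μ (v ⊗ v - w ⊗ w)` for orthonormal `v, w`. The identity
`(v - w) ⊙ (v + w) = v ⊗ v - w ⊗ w` writes this as `a ⊙ n₀` with `n₀ = (v + w) / √2`. -/

namespace Matrix

variable {m n K : Type*} [Fintype n] [Field K]

theorem rank_add_le (A B : Matrix m n K) : (A + B).rank ≤ A.rank + B.rank := by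
  rw [rank, rank, rank, mulVecLin_add]
  exact (Submodule.finrank_mono (LinearMap.range_add_le _ _)).trans
    (Submodule.finrank_add_le_finrank_add_finrank _ _)

theorem rank_eq_zero_iff {A : Matrix m n K} : A.rank = 0 ↔ A = 0 := by
  classical
  rw [rank, Submodule.finrank_eq_zero, LinearMap.range_eq_bot, ← toLin'_apply',
    LinearEquiv.map_eq_zero_iff]

theorem rank_smul_of_ne_zero (A : Matrix m n K) {c : K} (hc : c ≠ 0) : (c • A).rank = A.rank :=
  rank_smul_of_mem_nonZeroDivisors A (mem_nonZeroDivisors_of_ne_zero hc)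

theorem rank_vecMulVec_of_ne_zero {a b : n → K} (ha : a ≠ 0) (hb : b ≠ 0) :
    (vecMulVec a b).rank = 1 :=
  (rank_vecMulVec_le a b).antisymm <|
    Nat.one_le_iff_ne_zero.mpr <| rank_eq_zero_iff.not.mpr (vecMulVec_ne_zero ha hb)

theorem rank_add_transpose_le (N : Matrix n n K) : (N + Nᵀ).rank ≤ 2 * N.rank :=
  (rank_add_le N Nᵀ).trans_eq (by rw [rank_transpose, two_mul])

theorem two_le_rank_of_transpose_eq_neg [CharZero K] {N : Matrix n n K} (hN : Nᵀ = -N)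
    (h0 : N ≠ 0) : 2 ≤ N.rank := by
  obtain ⟨i, j, hij⟩ : ∃ i j, N i j ≠ 0 := by
    by_contra! h
    exact h0 (ext h)
  have hskew : ∀ p q, N q p = -N p q := fun p q => by
    simpa using congrFun (congrFun hN p) q
  have hdiag : ∀ p, N p p = 0 := fun p => CharZero.eq_neg_self_iff.mp (hskew p p)
  have hdet : (N.submatrix ![i, j] ![i, j]).det = N i j ^ 2 := by
    rw [det_fin_two]
    simp [hdiag, hskew i j]
    ring
  calc 2 = (N.submatrix ![i, j] ![i, j]).rank := by
        rw [rank_of_det_ne_zero (by rw [hdet]; exact pow_ne_zero 2 hij), Fintype.card_fin]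
    _ ≤ N.rank := rank_submatrix_le _ _ _

theorem add_transpose_ne_zero_of_rank_eq_one [CharZero K] {N : Matrix n n K} (hN : N.rank = 1) :
    N + Nᵀ ≠ 0 := fun h => by
  have := two_le_rank_of_transpose_eq_neg (eq_neg_of_add_eq_zero_right h)
    (by rintro rfl; simp at hN)
  omega

theorem IsHermitian.eq_sum_eigenvalues_smul_vecMulVec {𝕜 : Type*} [RCLike 𝕜] [DecidableEq n]
    {A : Matrix n n 𝕜} (hA : A.IsHermitian) :
    A = ∑ k, (hA.eigenvalues k : 𝕜) •
      vecMulVec (hA.eigenvectorBasis k) (star (hA.eigenvectorBasis k)) := by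
  conv_lhs => rw [hA.spectral_theorem, Unitary.conjStarAlgAut_apply]
  ext p q
  rw [mul_apply, sum_apply]
  refine Finset.sum_congr rfl fun k _ => ?_
  simp [mul_diagonal, vecMulVec_apply]
  ring

end Matrix

theorem Fintype.exists_pair_of_sum_eq_zero {ι M : Type*} [Fintype ι] [AddCommGroup M]
    [DecidableEq M] {f : ι → M} (hsum : ∑ i, f i = 0) (hf : f ≠ 0)
    (hcard : Fintype.card {i // f i ≠ 0} ≤ 2) :
    ∃ i j, i ≠ j ∧ f i ≠ 0 ∧ f j = -f i ∧ ∀ k, k ≠ i → k ≠ j → f k = 0 := by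
  classical
  set S := Finset.univ.filter (fun i => f i ≠ 0) with hS
  have hsumS : ∑ i ∈ S, f i = 0 := by rw [Finset.sum_filter_ne_zero, hsum]
  have hmem : ∀ k, k ∈ S ↔ f k ≠ 0 := by simp [hS]
  rw [Fintype.card_subtype] at hcard
  obtain ⟨i₀, hi₀⟩ := Function.ne_iff.mp hf
  interval_cases hc : S.card
  · simp_all
  · obtain ⟨i, hSi⟩ := Finset.card_eq_one.mp hc
    rw [hSi] at hsumS hmem
    exact absurd (by simpa using hsumS) ((hmem i).mp (Finset.mem_singleton_self i))
  · obtain ⟨i, j, hij, hSij⟩ := Finset.card_eq_two.mp hc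
    rw [hSij] at hsumS hmem
    rw [Finset.sum_pair hij] at hsumS
    refine ⟨i, j, hij, (hmem i).mp (by simp), eq_neg_of_add_eq_zero_right hsumS,
      fun k hki hkj => ?_⟩
    by_contra hk
    simpa [hki, hkj] using (hmem k).mpr hk

theorem vecMulVec_sub_add_vecMulVec_add_sub {n R : Type*} [CommRing R] (v w : n → R) :
    vecMulVec (v - w) (v + w) + vecMulVec (v + w) (v - w) =
      (2 : R) • (vecMulVec v v - vecMulVec w w) := by
  ext p q
  simp [vecMulVec_apply]
  ring

section

variable {n : Type*} [Fintype n]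

theorem exists_eq_smul_vecMulVec_sub_of_trace_eq_zero [DecidableEq n] {E : Matrix n n ℝ}
    (hE : E.IsSymm) (htr : E.trace = 0) (hrk : E.rank ≤ 2) (h0 : E ≠ 0) :
    ∃ μ : ℝ, μ ≠ 0 ∧ ∃ v w : n → ℝ, v ⬝ᵥ v = 1 ∧ w ⬝ᵥ w = 1 ∧ v ⬝ᵥ w = 0 ∧
      E = μ • (vecMulVec v v - vecMulVec w w) := by
  have hH : E.IsHermitian := isHermitian_iff_isSymm.mpr hE
  set b := hH.eigenvectorBasis
  have hsum : ∑ k, hH.eigenvalues k = 0 := by simpa [hH.trace_eq_sum_eigenvalues] using htr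
  have hne : hH.eigenvalues ≠ 0 := hH.eigenvalues_eq_zero_iff.not.mpr h0
  rw [hH.rank_eq_card_non_zero_eigs] at hrk
  obtain ⟨i, j, hij, hi, hj, hk⟩ := Fintype.exists_pair_of_sum_eq_zero hsum hne hrk
  have hdot : ∀ k l, (b k : n → ℝ) ⬝ᵥ b l = if k = l then 1 else 0 := fun k l => by
    rw [← orthonormal_iff_ite.mp b.orthonormal k l, EuclideanSpace.inner_eq_star_dotProduct]
    simp [dotProduct_comm]
  refine ⟨hH.eigenvalues i, hi, b i, b j, by simp [hdot], by simp [hdot], by simp [hdot, hij], ?_⟩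
  conv_lhs => rw [hH.eq_sum_eigenvalues_smul_vecMulVec]
  rw [Fintype.sum_eq_add i j hij fun k hk' => by simp [hk k hk'.1 hk'.2]]
  simp [hj, b, sub_eq_add_neg]

theorem exists_smul_vecMulVec_sub_eq_of_orthonormal {μ : ℝ} (hμ : μ ≠ 0) {v w : n → ℝ}
    (hv : v ⬝ᵥ v = 1) (hw : w ⬝ᵥ w = 1) (hvw : v ⬝ᵥ w = 0) :
    ∃ a n₀ : n → ℝ, a ≠ 0 ∧ n₀ ⬝ᵥ n₀ = 1 ∧
      μ • (vecMulVec v v - vecMulVec w w) = (1 / 2 : ℝ) • (vecMulVec a n₀ + vecMulVec n₀ a) := by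
  have hwv : w ⬝ᵥ v = 0 := by rw [dotProduct_comm, hvw]
  have hsub : (v - w) ⬝ᵥ (v - w) = 2 := by
    simp [sub_dotProduct, dotProduct_sub, hv, hw, hvw, hwv]; norm_num
  have hadd : (v + w) ⬝ᵥ (v + w) = 2 := by
    simp [add_dotProduct, dotProduct_add, hv, hw, hvw, hwv]; norm_num
  have hs : √2 * √2 = 2 := Real.mul_self_sqrt zero_le_two
  have hs0 : √2 ≠ 0 := by positivity
  refine ⟨(√2 * μ) • (v - w), (√2)⁻¹ • (v + w), ?_, ?_, ?_⟩
  · refine smul_ne_zero (mul_ne_zero hs0 hμ) fun h => ?_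
    simp [h] at hsub
  · rw [smul_dotProduct, dotProduct_smul, hadd, smul_eq_mul, smul_eq_mul, ← mul_assoc, ← mul_inv,
      hs, inv_mul_cancel₀ two_ne_zero]
  · rw [smul_vecMulVec, vecMulVec_smul, smul_vecMulVec, vecMulVec_smul, smul_smul, smul_smul,
      mul_comm (√2)⁻¹, ← smul_add, vecMulVec_sub_add_vecMulVec_add_sub, smul_smul, smul_smul]
    congr 1
    field_simp

variable {K : Type*} [Field K] [CharZero K]

theorem exists_rank_sub_eq_one_of_sub_eq {e₁ e₂ : Matrix n n K} (h₂s : e₂.IsSymm) {a b : n → K}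
    (ha : a ≠ 0) (hb : b ≠ 0) (h : e₁ - e₂ = (1 / 2 : K) • (vecMulVec a b + vecMulVec b a)) :
    ∃ M₁ M₂ : Matrix n n K, (1 / 2 : K) • (M₁ + M₁ᵀ) = e₁ ∧ (1 / 2 : K) • (M₂ + M₂ᵀ) = e₂ ∧
      (M₁ - M₂).rank = 1 := by
  refine ⟨e₂ + vecMulVec a b, e₂, ?_, ?_, ?_⟩
  · rw [sub_eq_iff_eq_add.mp h, transpose_add, transpose_vecMulVec, h₂s.eq]
    module
  · rw [h₂s.eq]
    module
  · rw [add_sub_cancel_left]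
    exact rank_vecMulVec_of_ne_zero ha hb

end

/-- Rank-one vs symmetrized rank-one connectedness for symmetric trace-free matrices:
(i) `e₁ - e₂ = a ⊙ n₀` with `a ≠ 0`, `|n₀| = 1`; (ii) there are `M₁, M₂` with symmetric
parts `e₁, e₂` and `rank (M₁ - M₂) = 1`; (iii) `rank (e₁ - e₂) ≤ 2` and `e₁ ≠ e₂`. -/
theorem stmt3 {n : ℕ} (e₁ e₂ : Matrix (Fin n) (Fin n) ℝ)
    (h₁s : e₁.IsSymm) (h₂s : e₂.IsSymm)
    (h₁t : e₁.trace = 0) (h₂t : e₂.trace = 0) :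
    List.TFAE
      [(∃ (a n₀ : Fin n → ℝ), a ≠ 0 ∧ n₀ ⬝ᵥ n₀ = 1 ∧
          e₁ - e₂ = (1 / 2 : ℝ) • (vecMulVec a n₀ + vecMulVec n₀ a)),
       (∃ M₁ M₂ : Matrix (Fin n) (Fin n) ℝ,
          (1 / 2 : ℝ) • (M₁ + M₁ᵀ) = e₁ ∧ (1 / 2 : ℝ) • (M₂ + M₂ᵀ) = e₂ ∧
          (M₁ - M₂).rank = 1),
       ((e₁ - e₂).rank ≤ 2 ∧ e₁ ≠ e₂)] := by
  tfae_have 1 → 2 := fun ⟨a, n₀, ha, hn₀, h⟩ =>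
    exists_rank_sub_eq_one_of_sub_eq h₂s ha (by rintro rfl; simp at hn₀) h
  tfae_have 2 → 3 := by
    rintro ⟨M₁, M₂, rfl, rfl, hrank⟩
    have hsub : (1 / 2 : ℝ) • (M₁ + M₁ᵀ) - (1 / 2 : ℝ) • (M₂ + M₂ᵀ) =
        (1 / 2 : ℝ) • ((M₁ - M₂) + (M₁ - M₂)ᵀ) := by
      rw [transpose_sub]
      module
    have hhalf : (1 / 2 : ℝ) ≠ 0 := by norm_num
    rw [ne_eq, ← sub_eq_zero, hsub, rank_smul_of_ne_zero _ hhalf, smul_eq_zero]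
    exact ⟨(rank_add_transpose_le _).trans (by rw [hrank]),
      by simpa [hhalf] using add_transpose_ne_zero_of_rank_eq_one hrank⟩
  tfae_have 3 → 1 := fun ⟨hrank, hne⟩ => by
    obtain ⟨μ, hμ, v, w, hv, hw, hvw, hE⟩ := exists_eq_smul_vecMulVec_sub_of_trace_eq_zero
      (h₁s.sub h₂s) (by rw [trace_sub, h₁t, h₂t, sub_zero]) hrank (sub_ne_zero.mpr hne)
    rw [hE]
    exact exists_smul_vecMulVec_sub_eq_of_orthonormal hμ hv hw hvw
  tfae_finish
end

section
/- Let K = {e⁽¹⁾, e⁽²⁾, e⁽³⁾} with e⁽¹⁾ = [[1,0],[0,-1]], e⁽²⁾ = (1/2)[[-1,√3],[√3,1]], e⁽³⁾ = (1/2)[[-1,-√3],[-√3,1]]. Then every element e of the convex hull of K is symmetrized rank-one connected with each element of K: for each i, either e = e⁽ⁱ⁾ or there exist a ∈ ℝ² \ {0} and a unit vector n with a · n = 0 such that e - e⁽ⁱ⁾ = (1/2)(a ⊗ n + n ⊗ a). -/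
open Matrix

noncomputable def e1 : Matrix (Fin 2) (Fin 2) ℝ := !![1, 0; 0, -1]
noncomputable def e2 : Matrix (Fin 2) (Fin 2) ℝ :=
  (1 / 2 : ℝ) • !![-1, Real.sqrt 3; Real.sqrt 3, 1]
noncomputable def e3 : Matrix (Fin 2) (Fin 2) ℝ :=
  (1 / 2 : ℝ) • !![-1, -Real.sqrt 3; -Real.sqrt 3, 1]

lemma hull_sym {e : Matrix (Fin 2) (Fin 2) ℝ}
    (he : e ∈ convexHull ℝ ({e1, e2, e3} : Set (Matrix (Fin 2) (Fin 2) ℝ))) :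
    e 1 0 = e 0 1 ∧ e 1 1 = -(e 0 0) := by
  have hconv : Convex ℝ {M : Matrix (Fin 2) (Fin 2) ℝ | M 1 0 = M 0 1 ∧ M 1 1 = -(M 0 0)} := by
    intro x hx y hy a b ha hb hab
    constructor <;>
      simp only [Matrix.add_apply, Matrix.smul_apply, smul_eq_mul, hx.1, hx.2, hy.1, hy.2] <;>
      ring
  have hsub : ({e1, e2, e3} : Set (Matrix (Fin 2) (Fin 2) ℝ)) ⊆
      {M : Matrix (Fin 2) (Fin 2) ℝ | M 1 0 = M 0 1 ∧ M 1 1 = -(M 0 0)} := by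
    rintro M (rfl | rfl | rfl) <;>
      constructor <;>
      simp [e1, e2, e3, Matrix.smul_apply] <;> norm_num
  exact convexHull_min hsub hconv he

lemma key (p q : ℝ) (h : ¬ (p = 0 ∧ q = 0)) :
    ∃ a n : Fin 2 → ℝ, a ≠ 0 ∧ n ⬝ᵥ n = 1 ∧ a ⬝ᵥ n = 0 ∧
      (1 / 2 : ℝ) • (vecMulVec a n + vecMulVec n a) = !![p, q; q, -p] := by
  have hpq : 0 < p ^ 2 + q ^ 2 := by
    rcases not_and_or.mp h with h | h <;> positivity
  set r := Real.sqrt (p ^ 2 + q ^ 2) with hr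
  have hr0 : 0 < r := Real.sqrt_pos.mpr hpq
  have hr2 : r ^ 2 = p ^ 2 + q ^ 2 := Real.sq_sqrt hpq.le
  by_cases hq : r + q = 0
  · have hp : p = 0 := by nlinarith
    refine ⟨![-2 * r, 0], ![0, 1], ?_, ?_, ?_, ?_⟩
    · intro hcontra
      have := congrFun hcontra 0
      simp at this
      nlinarith
    · simp [dotProduct, Fin.sum_univ_two]
    · simp [dotProduct, Fin.sum_univ_two]
    · ext i j
      fin_cases i <;> fin_cases j <;>
        simp [vecMulVec, Matrix.smul_apply, Matrix.add_apply, hp] <;> nlinarith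
  · have hq' : 0 < r + q := by
      rcases (lt_or_gt_of_ne hq) with h' | h'
      · nlinarith
      · exact h'
    set c := Real.sqrt ((r + q) / (2 * r)) with hc
    have hc0 : 0 < c := Real.sqrt_pos.mpr (by positivity)
    have hc2 : c ^ 2 = (r + q) / (2 * r) := Real.sq_sqrt (by positivity)
    set s := -p / (2 * r * c) with hs
    have hcp : 2 * r * c ^ 2 = r + q := by
      rw [hc2]; field_simp
    have hscp : s * (2 * r * c) = -p := by
      rw [hs]; field_simp
    have h1 : (2 * r * s ^ 2) * (r + q) = p ^ 2 := by
      calc (2 * r * s ^ 2) * (r + q) = (2 * r * s ^ 2) * (2 * r * c ^ 2) := by rw [hcp]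
        _ = (s * (2 * r * c)) ^ 2 := by ring
        _ = (-p) ^ 2 := by rw [hscp]
        _ = p ^ 2 := by ring
    have hss : 2 * r * s ^ 2 = r - q := by
      have hp2 : p ^ 2 = (r - q) * (r + q) := by nlinarith
      have h2 : (2 * r * s ^ 2) * (r + q) = (r - q) * (r + q) := by rw [h1, hp2]
      exact mul_right_cancel₀ (ne_of_gt hq') h2
    refine ⟨![-2 * r * s, 2 * r * c], ![c, s], ?_, ?_, ?_, ?_⟩
    · intro hcontra
      have h3 := congrFun hcontra 1
      simp at h3
      rcases h3 with h3 | h3 <;> linarith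
    · simp only [dotProduct, Fin.sum_univ_two, Matrix.cons_val_zero, Matrix.cons_val_one,
        Matrix.head_cons]
      nlinarith [hcp, hss]
    · simp [dotProduct, Fin.sum_univ_two]; ring
    · ext i j
      fin_cases i <;> fin_cases j
      · simp [vecMulVec, Matrix.smul_apply, Matrix.add_apply]
        linear_combination -hscp
      · simp [vecMulVec, Matrix.smul_apply, Matrix.add_apply]
        linear_combination (hcp - hss) / 2
      · simp [vecMulVec, Matrix.smul_apply, Matrix.add_apply]
        linear_combination (hcp - hss) / 2
      · simp [vecMulVec, Matrix.smul_apply, Matrix.add_apply]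
        linear_combination hscp

/-- Every element of the convex hull of the three wells is symmetrized rank-one connected
with each well: either it equals the well, or the difference is `(1/2)(a ⊗ n + n ⊗ a)`
with `a ≠ 0`, `|n| = 1`, `a ⊥ n`. -/
theorem stmt10 (e : Matrix (Fin 2) (Fin 2) ℝ)
    (he : e ∈ convexHull ℝ ({e1, e2, e3} : Set (Matrix (Fin 2) (Fin 2) ℝ)))
    (E : Matrix (Fin 2) (Fin 2) ℝ)
    (hE : E ∈ ({e1, e2, e3} : Set (Matrix (Fin 2) (Fin 2) ℝ))) :
    e = E ∨ ∃ (a n : Fin 2 → ℝ), a ≠ 0 ∧ n ⬝ᵥ n = 1 ∧ a ⬝ᵥ n = 0 ∧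
      e - E = (1 / 2 : ℝ) • (vecMulVec a n + vecMulVec n a) := by
  obtain ⟨he1, he2⟩ := hull_sym he
  obtain ⟨hE1, hE2⟩ := hull_sym (subset_convexHull ℝ _ hE)
  by_cases hpq : e 0 0 - E 0 0 = 0 ∧ e 0 1 - E 0 1 = 0
  · left
    ext i j
    fin_cases i <;> fin_cases j <;> simp <;> linarith [hpq.1, hpq.2, he1, he2, hE1, hE2]
  · right
    obtain ⟨a, n, ha, hn, han, heq⟩ := key _ _ hpq
    refine ⟨a, n, ha, hn, han, ?_⟩
    rw [heq]
    ext i j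
    fin_cases i <;> fin_cases j <;> simp [Matrix.sub_apply] <;> linarith
end
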